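/- arXiv:1706.02495 — 3 statements merged into one kernel-verified Lean document; each statement's English description precedes it below -/
import Mathlib

section
/- Let t be a positive integer, B a t×t real symmetric positive semidefinite matrix, Y ∈ ℝᵗ, and γ₀ > 0. Define V(γ) = B + γI, Ŷ(γ) = B·V(γ)⁻¹Y and S(γ) = ‖Y − Ŷ(γ)‖². Then S(γ₀) = −γ₀² · d/dγ [Yᵀ V(γ)⁻¹ Y] evaluated at γ = γ₀; equivalently, the function γ ↦ Yᵀ(B+γI)⁻¹Y has derivative at γ₀ equal to −S(γ₀)/γ₀². -/
/-!
The residual is `Y - B V⁻¹ Y = (V - B) V⁻¹ Y = γ₀ V⁻¹ Y`, so `S(γ₀) = γ₀² ‖V⁻¹ Y‖²`. On the other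
hand the resolvent identity `V(γ)⁻¹ - V(γ₀)⁻¹ = (γ₀ - γ) V(γ)⁻¹ V(γ₀)⁻¹` shows that the derivative
of `γ ↦ Yᵀ V(γ)⁻¹ Y` at `γ₀` is `-Yᵀ V⁻¹ V⁻¹ Y`, which is `-‖V⁻¹ Y‖²` because `V⁻¹` is symmetric.
-/

open Matrix

theorem hasDerivAt_of_sub_eq_mul {𝕜 : Type*} [NontriviallyNormedField 𝕜] {f g : 𝕜 → 𝕜} {x : 𝕜}
    (hg : ContinuousAt g x) (hfg : ∀ᶠ y in nhds x, f y - f x = (y - x) * g y) :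
    HasDerivAt f (g x) x := by
  rw [hasDerivAt_iff_tendsto_slope]
  refine (hg.tendsto.mono_left nhdsWithin_le_nhds).congr' ?_
  filter_upwards [nhdsWithin_le_nhds hfg, self_mem_nhdsWithin] with y hy hne
  rw [slope_def_field, hy, mul_div_cancel_left₀ _ (sub_ne_zero.mpr hne)]

namespace Matrix

variable {n : Type*} [Fintype n]

theorem sub_mul_inv_add_smul_one_mulVec [DecidableEq n] {R : Type*} [CommRing R]
    {B : Matrix n n R} {γ : R} (h : IsUnit (B + γ • 1).det) (y : n → R) :
    y - (B * (B + γ • 1)⁻¹) *ᵥ y = γ • ((B + γ • 1)⁻¹ *ᵥ y) := by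
  have hB : B * (B + γ • 1)⁻¹ = 1 - γ • (B + γ • 1)⁻¹ := by
    have hV := mul_nonsing_inv _ h
    rwa [add_mul, smul_mul, one_mul, ← eq_sub_iff_add_eq] at hV
  rw [hB, sub_mulVec, one_mulVec, smul_mulVec, sub_sub_cancel]

theorem IsSymm.dotProduct_mul_self_mulVec {R : Type*} [CommSemiring R] {A : Matrix n n R}
    (hA : A.IsSymm) (x y : n → R) : x ⬝ᵥ (A * A) *ᵥ y = (A *ᵥ x) ⬝ᵥ (A *ᵥ y) := by
  rw [← mulVec_mulVec, dotProduct_mulVec, ← mulVec_transpose, hA.eq]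

theorem inv_add_smul_one_sub_inv_add_smul_one [DecidableEq n] {R : Type*} [CommRing R]
    {B : Matrix n n R} {γ γ₀ : R} (h : IsUnit (B + γ • 1).det) (h₀ : IsUnit (B + γ₀ • 1).det) :
    (B + γ • 1)⁻¹ - (B + γ₀ • 1)⁻¹ = (γ₀ - γ) • ((B + γ • 1)⁻¹ * (B + γ₀ • 1)⁻¹) := by
  have hsub : B + γ₀ • 1 - (B + γ • 1) = (γ₀ - γ) • (1 : Matrix n n R) := by
    rw [add_sub_add_left_eq_sub, sub_smul]
  simp only [nonsing_inv_eq_ringInverse]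
  rw [Ring.inverse_sub_inverse (by simp only [isUnit_iff_isUnit_det, h, h₀]), hsub, mul_smul_comm,
    mul_one, smul_mul_assoc]

theorem hasDerivAt_dotProduct_inv_add_smul_one_mulVec [DecidableEq n] {𝕜 : Type*}
    [NontriviallyNormedField 𝕜] {B : Matrix n n 𝕜} {γ₀ : 𝕜} (h : IsUnit (B + γ₀ • 1).det)
    (x y : n → 𝕜) :
    HasDerivAt (fun γ => x ⬝ᵥ ((B + γ • 1)⁻¹ *ᵥ y))
      (-(x ⬝ᵥ ((B + γ₀ • 1)⁻¹ * (B + γ₀ • 1)⁻¹) *ᵥ y)) γ₀ := by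
  have hcont : Continuous fun γ : 𝕜 => B + γ • (1 : Matrix n n 𝕜) := by fun_prop
  have hinv : ContinuousAt (fun γ : 𝕜 => (B + γ • 1)⁻¹) γ₀ := by
    refine (continuousAt_matrix_inv _ ?_).comp hcont.continuousAt
    simpa only [Ring.inverse_eq_inv'] using continuousAt_inv₀ h.ne_zero
  refine hasDerivAt_of_sub_eq_mul (g := fun γ => -(x ⬝ᵥ ((B + γ • 1)⁻¹ * (B + γ₀ • 1)⁻¹) *ᵥ y))
    (by fun_prop) ?_
  filter_upwards [(hcont.matrix_det.continuousAt (x := γ₀)).eventually_ne h.ne_zero] with γ hγ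
  rw [← dotProduct_sub, ← sub_mulVec, inv_add_smul_one_sub_inv_add_smul_one hγ.isUnit h,
    smul_mulVec, dotProduct_smul, smul_eq_mul]
  ring

end Matrix

theorem gcv_ssr_eq_neg_gamma_sq_deriv_quadform_general
    (t : ℕ) (B : Matrix (Fin t) (Fin t) ℝ) (hB : B.PosSemidef)
    (Y : Fin t → ℝ) (γ₀ : ℝ) (hγ₀ : 0 < γ₀) :
    (Y - (B * (B + γ₀ • (1 : Matrix (Fin t) (Fin t) ℝ))⁻¹) *ᵥ Y) ⬝ᵥ
        (Y - (B * (B + γ₀ • (1 : Matrix (Fin t) (Fin t) ℝ))⁻¹) *ᵥ Y)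
      = -γ₀ ^ 2 * deriv (fun γ : ℝ =>
          Y ⬝ᵥ ((B + γ • (1 : Matrix (Fin t) (Fin t) ℝ))⁻¹ *ᵥ Y)) γ₀ ∧
    HasDerivAt (fun γ : ℝ => Y ⬝ᵥ ((B + γ • (1 : Matrix (Fin t) (Fin t) ℝ))⁻¹ *ᵥ Y))
      (-((Y - (B * (B + γ₀ • (1 : Matrix (Fin t) (Fin t) ℝ))⁻¹) *ᵥ Y) ⬝ᵥ
          (Y - (B * (B + γ₀ • (1 : Matrix (Fin t) (Fin t) ℝ))⁻¹) *ᵥ Y)) / γ₀ ^ 2) γ₀ := by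
  have hV : (B + γ₀ • (1 : Matrix (Fin t) (Fin t) ℝ)).PosDef :=
    PosDef.posSemidef_add hB (.smul .one hγ₀)
  have hdet := (isUnit_iff_isUnit_det _).mp hV.isUnit
  have hS := congrArg (fun r => r ⬝ᵥ r) (sub_mul_inv_add_smul_one_mulVec hdet Y)
  simp only [smul_dotProduct, dotProduct_smul, smul_eq_mul, ← mul_assoc, ← sq] at hS
  have hderiv := hasDerivAt_dotProduct_inv_add_smul_one_mulVec hdet Y Y
  rw [(isHermitian_iff_isSymm.mp hV.isHermitian).inv.dotProduct_mul_self_mulVec] at hderiv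
  refine ⟨?_, ?_⟩
  · rw [hderiv.deriv, hS]
    ring
  · rwa [hS, neg_div, mul_div_cancel_left₀ _ (by positivity)]

/-- With `V(γ) = B + γI`, `Ŷ(γ) = B V(γ)⁻¹ Y` and
`S(γ) = ‖Y − Ŷ(γ)‖²`, one has `S(γ₀) = −γ₀² · d/dγ (Yᵀ V(γ)⁻¹ Y)|_{γ₀}`; equivalently
`γ ↦ Yᵀ (B + γI)⁻¹ Y` has derivative `−S(γ₀)/γ₀²` at `γ₀`. -/
theorem gcv_ssr_eq_neg_gamma_sq_deriv_quadform
    (t : ℕ) (ht : 0 < t) (B : Matrix (Fin t) (Fin t) ℝ) (hB : B.PosSemidef)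
    (Y : Fin t → ℝ) (γ₀ : ℝ) (hγ₀ : 0 < γ₀) :
    (Y - (B * (B + γ₀ • (1 : Matrix (Fin t) (Fin t) ℝ))⁻¹) *ᵥ Y) ⬝ᵥ
        (Y - (B * (B + γ₀ • (1 : Matrix (Fin t) (Fin t) ℝ))⁻¹) *ᵥ Y)
      = -γ₀ ^ 2 * deriv (fun γ : ℝ =>
          Y ⬝ᵥ ((B + γ • (1 : Matrix (Fin t) (Fin t) ℝ))⁻¹ *ᵥ Y)) γ₀ ∧
    HasDerivAt (fun γ : ℝ => Y ⬝ᵥ ((B + γ • (1 : Matrix (Fin t) (Fin t) ℝ))⁻¹ *ᵥ Y))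
      (-((Y - (B * (B + γ₀ • (1 : Matrix (Fin t) (Fin t) ℝ))⁻¹) *ᵥ Y) ⬝ᵥ
          (Y - (B * (B + γ₀ • (1 : Matrix (Fin t) (Fin t) ℝ))⁻¹) *ᵥ Y)) / γ₀ ^ 2) γ₀ :=
  gcv_ssr_eq_neg_gamma_sq_deriv_quadform_general t B hB Y γ₀ hγ₀
end

section
/- Let n be a positive integer, A and Q real n×n matrices, C a real 1×n matrix, and γ₀ a real number. Let P be a function from ℝ to real n×n matrices that is differentiable at γ₀ with derivative Σ₀, such that P(γ₀) is symmetric and the scalar s₀ = (C P(γ₀) Cᵀ)₀₀ + γ₀ is nonzero. Define K(γ) = A P(γ) Cᵀ · ((C P(γ) Cᵀ)₀₀ + γ)⁻¹ and K₀ = K(γ₀). Then the Riccati map γ ↦ A P(γ) Aᵀ + Q − A P(γ) Cᵀ · ((C P(γ) Cᵀ)₀₀ + γ)⁻¹ · C P(γ) Aᵀ is differentiable at γ₀ with derivative (A − K₀ C) Σ₀ (A − K₀ C)ᵀ + K₀ K₀ᵀ. -/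
open Matrix

/-!
With `s = (C P Cᵀ)₀₀ + γ`, `U = A P Cᵀ` and `V = C P Aᵀ`, the `(i, j)` entry of the Riccati map
is `(A P Aᵀ)ᵢⱼ + Qᵢⱼ − s⁻¹ Uᵢ Vⱼ`, so the product and inverse rules differentiate it; symmetry of
`P(γ₀)` gives `V = Uᵀ` at `γ₀`, and the derivative is
`A Σ Aᵀ − s⁻¹ (A Σ Cᵀ Uᵀ + U C Σ Aᵀ) + s⁻² ((C Σ Cᵀ)₀₀ + 1) U Uᵀ`, the `+ 1` coming from
`∂s/∂γ`. Expanding `(A − K C) Σ (A − K C)ᵀ + K Kᵀ` with `K = s⁻¹ U` gives the same matrix,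
because the `1 × 1` matrix `C Σ Cᵀ` between `U` and `Uᵀ` acts as a scalar.
-/

theorem hasDerivAt_mul_mul_apply {𝕜 ι κ m p : Type*} [NontriviallyNormedField 𝕜]
    [Fintype ι] [Fintype κ] {P : 𝕜 → Matrix ι κ 𝕜} {S : Matrix ι κ 𝕜} {γ₀ : 𝕜}
    (hP : ∀ i j, HasDerivAt (fun γ => P γ i j) (S i j) γ₀)
    (X : Matrix m ι 𝕜) (Y : Matrix κ p 𝕜) (i : m) (j : p) :
    HasDerivAt (fun γ => (X * P γ * Y) i j) ((X * S * Y) i j) γ₀ := by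
  simp only [mul_apply]
  exact HasDerivAt.fun_sum fun l _ =>
    (HasDerivAt.fun_sum fun k _ => (hP k l).const_mul _).mul_const _

theorem Matrix.mul_apply_fin_one {R m p : Type*} [NonUnitalNonAssocSemiring R]
    (X : Matrix m (Fin 1) R) (Y : Matrix (Fin 1) p R) (i : m) (j : p) :
    (X * Y) i j = X i 0 * Y 0 j := by
  simp [mul_apply]

theorem Matrix.mul_fin_one_mul {R m p : Type*} [CommSemiring R]
    (X : Matrix m (Fin 1) R) (W : Matrix (Fin 1) (Fin 1) R) (Y : Matrix (Fin 1) p R) :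
    X * W * Y = W 0 0 • (X * Y) := by
  ext i j
  simp only [Matrix.smul_apply, mul_apply_fin_one, smul_eq_mul]
  ring

theorem closedLoop_sandwich_add_gain_mul_transpose {K ι : Type*} [Field K] [Fintype ι]
    (A S : Matrix ι ι K) (C : Matrix (Fin 1) ι K) (U : Matrix ι (Fin 1) K) (s : K) :
    (A - (s⁻¹ • U) * C) * S * (A - (s⁻¹ • U) * C)ᵀ + (s⁻¹ • U) * (s⁻¹ • U)ᵀ
      = A * S * Aᵀ - s⁻¹ • (A * S * Cᵀ * Uᵀ + U * (C * S * Aᵀ))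
        + (s⁻¹ ^ 2 * ((C * S * Cᵀ) 0 0 + 1)) • (U * Uᵀ) := by
  have hUSU : U * C * S * (Cᵀ * Uᵀ) = (C * S * Cᵀ) 0 0 • (U * Uᵀ) := by
    rw [← mul_fin_one_mul]
    simp only [Matrix.mul_assoc]
  rw [transpose_sub, transpose_mul, transpose_smul]
  simp only [Matrix.sub_mul, Matrix.mul_sub, Matrix.smul_mul, Matrix.mul_smul, smul_smul,
    Matrix.mul_assoc] at hUSU ⊢
  rw [hUSU]
  module

theorem riccati_map_hasDerivAt_general
    (n : ℕ) (A Q : Matrix (Fin n) (Fin n) ℝ)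
    (C : Matrix (Fin 1) (Fin n) ℝ) (γ₀ : ℝ)
    (P : ℝ → Matrix (Fin n) (Fin n) ℝ) (S₀ : Matrix (Fin n) (Fin n) ℝ)
    (hP : ∀ i j, HasDerivAt (fun γ : ℝ => P γ i j) (S₀ i j) γ₀)
    (hPsymm : (P γ₀).IsSymm)
    (hs : (C * P γ₀ * Cᵀ) 0 0 + γ₀ ≠ 0)
    (K₀ : Matrix (Fin n) (Fin 1) ℝ)
    (hK₀ : K₀ = ((C * P γ₀ * Cᵀ) 0 0 + γ₀)⁻¹ • (A * P γ₀ * Cᵀ)) :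
    ∀ i j, HasDerivAt
      (fun γ : ℝ => (A * P γ * Aᵀ + Q
        - ((C * P γ * Cᵀ) 0 0 + γ)⁻¹ • (A * P γ * Cᵀ * (C * P γ * Aᵀ))) i j)
      (((A - K₀ * C) * S₀ * (A - K₀ * C)ᵀ + K₀ * K₀ᵀ) i j) γ₀ := by
  subst hK₀
  intro i j
  rw [closedLoop_sandwich_add_gain_mul_transpose]
  have hV : C * P γ₀ * Aᵀ = (A * P γ₀ * Cᵀ)ᵀ := by
    rw [transpose_mul, transpose_mul, transpose_transpose, hPsymm.eq, Matrix.mul_assoc]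
  have hsInv := ((hasDerivAt_mul_mul_apply hP C Cᵀ 0 0).fun_add (hasDerivAt_id' γ₀)).fun_inv hs
  have hUV := (hasDerivAt_mul_mul_apply hP A Cᵀ i 0).fun_mul (hasDerivAt_mul_mul_apply hP C Aᵀ 0 j)
  have hRiccati :=
    ((hasDerivAt_mul_mul_apply hP A Aᵀ i j).add_const (Q i j)).fun_sub (hsInv.fun_mul hUV)
  simp only [Matrix.sub_apply, Matrix.add_apply, Matrix.smul_apply, smul_eq_mul,
    mul_apply_fin_one]
  refine hRiccati.congr_deriv ?_
  rw [hV]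
  simp only [transpose_apply]
  generalize (C * P γ₀ * Cᵀ) 0 0 + γ₀ = s
  ring

/-- equation DRE2 of the paper. If `P : ℝ → ℝ^{n×n}` is differentiable at
`γ₀` with derivative `S₀` (entrywise), `P γ₀` is symmetric and `s₀ = (C P(γ₀) Cᵀ)₀₀ + γ₀ ≠ 0`,
then with Kalman gain `K(γ) = A P(γ) Cᵀ ((C P(γ) Cᵀ)₀₀ + γ)⁻¹` and `K₀ = K(γ₀)`, the Riccati map
`γ ↦ A P(γ) Aᵀ + Q − A P(γ) Cᵀ ((C P(γ) Cᵀ)₀₀ + γ)⁻¹ C P(γ) Aᵀ` is differentiable at `γ₀` with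
derivative `(A − K₀C) S₀ (A − K₀C)ᵀ + K₀ K₀ᵀ`. -/
theorem riccati_map_hasDerivAt
    (n : ℕ) (hn : 0 < n) (A Q : Matrix (Fin n) (Fin n) ℝ)
    (C : Matrix (Fin 1) (Fin n) ℝ) (γ₀ : ℝ)
    (P : ℝ → Matrix (Fin n) (Fin n) ℝ) (S₀ : Matrix (Fin n) (Fin n) ℝ)
    (hP : ∀ i j, HasDerivAt (fun γ : ℝ => P γ i j) (S₀ i j) γ₀)
    (hPsymm : (P γ₀).IsSymm)
    (hs : (C * P γ₀ * Cᵀ) 0 0 + γ₀ ≠ 0)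
    (K₀ : Matrix (Fin n) (Fin 1) ℝ)
    (hK₀ : K₀ = ((C * P γ₀ * Cᵀ) 0 0 + γ₀)⁻¹ • (A * P γ₀ * Cᵀ)) :
    ∀ i j, HasDerivAt
      (fun γ : ℝ => (A * P γ * Aᵀ + Q
        - ((C * P γ * Cᵀ) 0 0 + γ)⁻¹ • (A * P γ * Cᵀ * (C * P γ * Aᵀ))) i j)
      (((A - K₀ * C) * S₀ * (A - K₀ * C)ᵀ + K₀ * K₀ᵀ) i j) γ₀ :=
  riccati_map_hasDerivAt_general n A Q C γ₀ P S₀ hP hPsymm hs K₀ hK₀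
end

section
/- Let n be a positive integer, A a real n×n matrix, C a real 1×n matrix, y and γ₀ real numbers. Let P : ℝ → (real n×n matrices) be differentiable at γ₀ with derivative Σ₀, and let x̂ : ℝ → ℝⁿ be differentiable at γ₀ with derivative ζ₀, such that the scalar s₀ = (C P(γ₀) Cᵀ)₀₀ + γ₀ is nonzero. Define K(γ) = A P(γ) Cᵀ · ((C P(γ) Cᵀ)₀₀ + γ)⁻¹, K₀ = K(γ₀), and G₀ = (A Σ₀ Cᵀ − K₀ · ((C Σ₀ Cᵀ)₀₀ + 1)) · s₀⁻¹. Then the function γ ↦ A x̂(γ) + K(γ) · (y − (C x̂(γ))₀) is differentiable at γ₀ with derivative (A − K₀ C) ζ₀ + G₀ · (y − (C x̂(γ₀))₀). -/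
open Matrix

/-!
Write `s(γ) = (C P(γ) Cᵀ)₀₀ + γ`, so that `K = s⁻¹ • (A P Cᵀ)`. The quotient rule in the form
`(a / s)' = s⁻¹ (a' − s' · (a / s))` shows that the derivative of the Kalman gain is exactly the
modified gain `G₀`, since `s' = (C Σ₀ Cᵀ)₀₀ + 1` and `(A P Cᵀ)' = A Σ₀ Cᵀ`. The product rule
applied to `A x̂ + K (y − C x̂)` then gives `(A − K₀ C) ζ₀ + G₀ (y − C x̂)`.
-/

section Entrywise

variable {𝕜 l m n o : Type*} [NontriviallyNormedField 𝕜] [Fintype m] [Fintype n]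

theorem hasDerivAt_mulVec_apply (M : Matrix l n 𝕜) {x : 𝕜 → n → 𝕜} {v : n → 𝕜} {t : 𝕜}
    (hx : ∀ j, HasDerivAt (fun s => x s j) (v j) t) (i : l) :
    HasDerivAt (fun s => (M *ᵥ x s) i) ((M *ᵥ v) i) t := by
  simp only [mulVec, dotProduct]
  exact HasDerivAt.fun_sum fun j _ => (hx j).const_mul (M i j)

theorem hasDerivAt_mul_mul_apply_s9 (L : Matrix l m 𝕜) (R : Matrix n o 𝕜)
    {P : 𝕜 → Matrix m n 𝕜} {S : Matrix m n 𝕜} {t : 𝕜}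
    (hP : ∀ i j, HasDerivAt (fun s => P s i j) (S i j) t) (i : l) (k : o) :
    HasDerivAt (fun s => (L * P s * R) i k) ((L * S * R) i k) t := by
  simp only [mul_apply, Finset.sum_mul]
  exact HasDerivAt.fun_sum fun j _ => HasDerivAt.fun_sum fun a _ =>
    ((hP a j).const_mul (L i a)).mul_const (R j k)

end Entrywise

theorem HasDerivAt.inv_mul_of_ne_zero {𝕜 : Type*} [NontriviallyNormedField 𝕜]
    {s a : 𝕜 → 𝕜} {ds da t : 𝕜} (hs : HasDerivAt s ds t) (ha : HasDerivAt a da t)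
    (hst : s t ≠ 0) :
    HasDerivAt (fun u => (s u)⁻¹ * a u) ((s t)⁻¹ * (da - ds * ((s t)⁻¹ * a t))) t := by
  refine ((hs.inv hst).mul ha).congr_deriv ?_
  rw [Pi.inv_apply]
  field_simp
  ring

theorem hasDerivAt_kalmanGain_apply {n : Type*} [Fintype n]
    (A : Matrix n n ℝ) (C : Matrix (Fin 1) n ℝ) {P : ℝ → Matrix n n ℝ} {S : Matrix n n ℝ}
    {γ₀ : ℝ} (hP : ∀ i j, HasDerivAt (fun γ => P γ i j) (S i j) γ₀)
    (hs : (C * P γ₀ * Cᵀ) 0 0 + γ₀ ≠ 0) (i : n) :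
    HasDerivAt (fun γ => (((C * P γ * Cᵀ) 0 0 + γ)⁻¹ • (A * P γ * Cᵀ)) i 0)
      ((((C * P γ₀ * Cᵀ) 0 0 + γ₀)⁻¹ • (A * S * Cᵀ - ((C * S * Cᵀ) 0 0 + 1) •
        (((C * P γ₀ * Cᵀ) 0 0 + γ₀)⁻¹ • (A * P γ₀ * Cᵀ)))) i 0) γ₀ := by
  have hinnovVar := (hasDerivAt_mul_mul_apply_s9 C Cᵀ hP 0 0).fun_add (hasDerivAt_id' γ₀)
  simpa only [Matrix.smul_apply, Matrix.sub_apply, smul_eq_mul] using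
    hinnovVar.inv_mul_of_ne_zero (hasDerivAt_mul_mul_apply_s9 A Cᵀ hP i 0) hs

theorem sub_mul_mulVec_apply_of_fin_one {R m n : Type*} [CommRing R] [Fintype n]
    (A : Matrix m n R) (K : Matrix m (Fin 1) R) (C : Matrix (Fin 1) n R) (v : n → R) (i : m) :
    ((A - K * C) *ᵥ v) i = (A *ᵥ v) i - K i 0 * (C *ᵥ v) 0 := by
  rw [sub_mulVec, ← mulVec_mulVec]
  simp only [Pi.sub_apply, mulVec, dotProduct, Fin.sum_univ_one]

theorem kalman_prediction_hasDerivAt_zeta_general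
    (n : ℕ) (A : Matrix (Fin n) (Fin n) ℝ)
    (C : Matrix (Fin 1) (Fin n) ℝ) (y γ₀ : ℝ)
    (P : ℝ → Matrix (Fin n) (Fin n) ℝ) (S₀ : Matrix (Fin n) (Fin n) ℝ)
    (hP : ∀ i j, HasDerivAt (fun γ : ℝ => P γ i j) (S₀ i j) γ₀)
    (xhat : ℝ → (Fin n → ℝ)) (ζ₀ : Fin n → ℝ)
    (hx : ∀ i, HasDerivAt (fun γ : ℝ => xhat γ i) (ζ₀ i) γ₀)
    (s₀ : ℝ) (hs₀_def : s₀ = (C * P γ₀ * Cᵀ) 0 0 + γ₀) (hs₀ : s₀ ≠ 0)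
    (K : ℝ → Matrix (Fin n) (Fin 1) ℝ)
    (hK : ∀ γ, K γ = ((C * P γ * Cᵀ) 0 0 + γ)⁻¹ • (A * P γ * Cᵀ))
    (K₀ : Matrix (Fin n) (Fin 1) ℝ) (hK₀ : K₀ = K γ₀)
    (G₀ : Matrix (Fin n) (Fin 1) ℝ)
    (hG₀ : G₀ = s₀⁻¹ • (A * S₀ * Cᵀ - ((C * S₀ * Cᵀ) 0 0 + 1) • K₀)) :
    ∀ i, HasDerivAt
      (fun γ : ℝ => (A *ᵥ xhat γ + (y - (C *ᵥ xhat γ) 0) • (fun j => K γ j 0)) i)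
      (((A - K₀ * C) *ᵥ ζ₀ + (y - (C *ᵥ xhat γ₀) 0) • (fun j => G₀ j 0)) i) γ₀ := by
  intro i
  subst hs₀_def hG₀ hK₀
  have hgain : HasDerivAt (fun γ => K γ i 0)
      ((((C * P γ₀ * Cᵀ) 0 0 + γ₀)⁻¹ •
        (A * S₀ * Cᵀ - ((C * S₀ * Cᵀ) 0 0 + 1) • K γ₀)) i 0) γ₀ := by
    simpa only [hK] using hasDerivAt_kalmanGain_apply A C hP hs₀ i
  have hinnov := (hasDerivAt_mulVec_apply C hx 0).const_sub y
  refine ((hasDerivAt_mulVec_apply A hx i).add (hinnov.mul hgain)).congr_deriv ?_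
  simp only [Pi.add_apply, Pi.smul_apply, smul_eq_mul, sub_mul_mulVec_apply_of_fin_one]
  ring

/-- equation zpred of the paper. If `P : ℝ → ℝ^{n×n}` has entrywise
derivative `S₀` at `γ₀` and `xhat : ℝ → ℝⁿ` has derivative `ζ₀` at `γ₀`, with
`s₀ = (C P(γ₀) Cᵀ)₀₀ + γ₀ ≠ 0`, Kalman gain `K(γ) = A P(γ) Cᵀ ((C P(γ) Cᵀ)₀₀ + γ)⁻¹`,
`K₀ = K(γ₀)` and modified gain `G₀ = (A S₀ Cᵀ − K₀ ((C S₀ Cᵀ)₀₀ + 1)) s₀⁻¹`, then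
`γ ↦ A xhat(γ) + K(γ) (y − (C xhat(γ))₀)` is differentiable at `γ₀` with derivative
`(A − K₀C) ζ₀ + G₀ (y − (C xhat(γ₀))₀)`. -/
theorem kalman_prediction_hasDerivAt_zeta
    (n : ℕ) (hn : 0 < n) (A : Matrix (Fin n) (Fin n) ℝ)
    (C : Matrix (Fin 1) (Fin n) ℝ) (y γ₀ : ℝ)
    (P : ℝ → Matrix (Fin n) (Fin n) ℝ) (S₀ : Matrix (Fin n) (Fin n) ℝ)
    (hP : ∀ i j, HasDerivAt (fun γ : ℝ => P γ i j) (S₀ i j) γ₀)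
    (xhat : ℝ → (Fin n → ℝ)) (ζ₀ : Fin n → ℝ)
    (hx : ∀ i, HasDerivAt (fun γ : ℝ => xhat γ i) (ζ₀ i) γ₀)
    (s₀ : ℝ) (hs₀_def : s₀ = (C * P γ₀ * Cᵀ) 0 0 + γ₀) (hs₀ : s₀ ≠ 0)
    (K : ℝ → Matrix (Fin n) (Fin 1) ℝ)
    (hK : ∀ γ, K γ = ((C * P γ * Cᵀ) 0 0 + γ)⁻¹ • (A * P γ * Cᵀ))
    (K₀ : Matrix (Fin n) (Fin 1) ℝ) (hK₀ : K₀ = K γ₀)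
    (G₀ : Matrix (Fin n) (Fin 1) ℝ)
    (hG₀ : G₀ = s₀⁻¹ • (A * S₀ * Cᵀ - ((C * S₀ * Cᵀ) 0 0 + 1) • K₀)) :
    ∀ i, HasDerivAt
      (fun γ : ℝ => (A *ᵥ xhat γ + (y - (C *ᵥ xhat γ) 0) • (fun j => K γ j 0)) i)
      (((A - K₀ * C) *ᵥ ζ₀ + (y - (C *ᵥ xhat γ₀) 0) • (fun j => G₀ j 0)) i) γ₀ :=
  kalman_prediction_hasDerivAt_zeta_general n A C y γ₀ P S₀ hP xhat ζ₀ hx s₀ hs₀_def hs₀ K hK K₀ hK₀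
    G₀ hG₀
end
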